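/- arXiv:2302.02789 — 4 statements merged into one kernel-verified Lean document; each statement's English description precedes it below -/
import Mathlib

section
/- Let R : ℝ → ℝ be differentiable with R' decreasing (i.e. R concave) on [u, M], where 0 < u < M. Suppose the function x ↦ R(x)/x attains its maximum γ over [u, M] uniquely at x = M, i.e. R(M) = γ·M and R(x)/x < γ for all x ∈ [u, M). Then for all x₀ ∈ (u, M), R'(x₀) > R(x₀)/x₀. -/
open Set

theorem stmt_2 (R : ℝ → ℝ) (u M γ : ℝ) (hu : 0 < u) (huM : u < M)
    (hdiff : ∀ x ∈ Icc u M, DifferentiableAt ℝ R x)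
    (hconc : AntitoneOn (deriv R) (Icc u M))
    (hmax : R M = γ * M)
    (hlt : ∀ x ∈ Ico u M, R x / x < γ) :
    ∀ x₀ ∈ Ioo u M, deriv R x₀ > R x₀ / x₀ := by
  rintro x₀ ⟨hux, hxM⟩
  by_contra h
  push_neg at h
  set s := R x₀ / x₀ with hs
  have hx0pos : 0 < x₀ := hu.trans hux
  have hx0mem : x₀ ∈ Icc u M := ⟨hux.le, hxM.le⟩
  -- MVT on [x₀, M]
  have hcont : ContinuousOn R (Icc x₀ M) := fun y hy =>
    ((hdiff y ⟨hux.le.trans hy.1, hy.2⟩).continuousAt).continuousWithinAt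
  have hdiff' : ∀ y ∈ Ioo x₀ M, HasDerivAt R (deriv R y) y := fun y hy =>
    (hdiff y ⟨hux.le.trans hy.1.le, hy.2.le⟩).hasDerivAt
  obtain ⟨c, hc, hceq⟩ := exists_hasDerivAt_eq_slope R (deriv R) hxM hcont hdiff'
  have hcmem : c ∈ Icc u M := ⟨hux.le.trans hc.1.le, hc.2.le⟩
  have hle : deriv R c ≤ s := le_trans (hconc hx0mem hcmem hc.1.le) h
  have hslope : (R M - R x₀) / (M - x₀) ≤ s := hceq ▸ hle
  have hMx : 0 < M - x₀ := sub_pos.mpr hxM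
  have h1 : R M - R x₀ ≤ s * (M - x₀) := (div_le_iff₀ hMx).mp hslope
  have h2 : R x₀ = s * x₀ := by rw [hs, div_mul_cancel₀ _ hx0pos.ne']
  have h3 : R M ≤ s * M := by nlinarith
  have hsγ : s < γ := hlt x₀ ⟨hux.le, hxM⟩
  have hMpos : 0 < M := hx0pos.trans hxM
  nlinarith
end

section
/- Let h : ℝ → ℝ be C², h(0) = 0, with A := h'(0) ≠ 0, and let φ(t, x) denote the flow of ẋ = h(x). Fix ω > 0 and set R(x) := φ(ω, x). Then lim_{x → 0⁺} R(x)/x = exp(A·ω). -/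
open Set Filter Real

/-- If `f t ≤ 0` and either `f t < 0` or the derivative is negative, then `f < 0`
just to the right of `t`. -/
lemma aux_step_right {f : ℝ → ℝ} {d t : ℝ} (hf : HasDerivAt f d t)
    (h0 : f t ≤ 0) (hd : f t = 0 → d < 0) : ∀ᶠ s in nhdsWithin t (Ioi t), f s < 0 := by
  rcases lt_or_eq_of_le h0 with hlt | heq
  · exact (hf.continuousAt.tendsto.eventually_lt_const hlt).filter_mono nhdsWithin_le_nhds
  · have hd' : d < 0 := hd heq
    have hslope : Tendsto (slope f t) (nhdsWithin t (Ioi t)) (nhds d) :=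
      (hasDerivAt_iff_tendsto_slope.mp hf).mono_left
        (nhdsWithin_mono t (fun s hs => ne_of_gt hs))
    filter_upwards [hslope.eventually_lt_const hd', self_mem_nhdsWithin] with s hs hst
    have hst' : (0:ℝ) < s - t := sub_pos.mpr hst
    have h2 : f s - f t < 0 := by
      have h1 : slope f t s * (s - t) < 0 := mul_neg_of_neg_of_pos hs hst'
      rwa [slope_def_field, div_mul_cancel₀ _ (ne_of_gt hst')] at h1
    linarith [heq]

theorem stmt_4 (h : ℝ → ℝ) (φ : ℝ → ℝ → ℝ) (ω : ℝ) (hω : 0 < ω)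
    (hC2 : ContDiff ℝ 2 h) (h0 : h 0 = 0)
    (A : ℝ) (hA : A = deriv h 0) (hAne : A ≠ 0)
    (hflow0 : ∀ x : ℝ, φ 0 x = x)
    (hflow : ∀ x t : ℝ, HasDerivAt (fun s => φ s x) (h (φ t x)) t) :
    Tendsto (fun x => φ ω x / x) (nhdsWithin 0 (Ioi 0)) (nhds (Real.exp (A * ω))) := by
  have hdiffA : HasDerivAt h A 0 := by
    have hdiff : DifferentiableAt ℝ h 0 :=
      (hC2.differentiable (by norm_num)).differentiableAt
    rw [hA]; exact hdiff.hasDerivAt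
  have hcont : ∀ x, Continuous (fun s => φ s x) := fun x =>
    continuous_iff_continuousAt.mpr (fun t => (hflow x t).continuousAt)
  rw [Metric.tendsto_nhdsWithin_nhds]
  intro ε' hε'
  -- choose ε from continuity of e ↦ exp ((A+e)*ω)
  have hq : Continuous fun e : ℝ => Real.exp ((A + e) * ω) := by continuity
  have hq0 : Tendsto (fun e : ℝ => Real.exp ((A + e) * ω)) (nhds 0) (nhds (Real.exp (A * ω))) := by
    have := hq.tendsto 0
    simpa using this
  rw [Metric.tendsto_nhds_nhds] at hq0
  obtain ⟨η, hη, hηq⟩ := hq0 ε' hε'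
  set ε : ℝ := η / 2 with hεdef
  have hεpos : 0 < ε := by positivity
  have hqup : |Real.exp ((A + ε) * ω) - Real.exp (A * ω)| < ε' := by
    have := hηq (x := ε) (by rw [Real.dist_eq]; rw [sub_zero, abs_of_pos hεpos]; linarith)
    rwa [Real.dist_eq] at this
  have hqdown : |Real.exp ((A - ε) * ω) - Real.exp (A * ω)| < ε' := by
    have := hηq (x := -ε) (by rw [Real.dist_eq]; rw [sub_zero, abs_neg, abs_of_pos hεpos]; linarith)
    rw [Real.dist_eq] at this
    have he : A + -ε = A - ε := by ring
    rwa [he] at this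
  -- little-o estimate: |h u - u * A| ≤ (ε/2) * |u| near 0
  have hlo : (fun u => h u - h 0 - (u - 0) • A) =o[nhds 0] fun u => u - 0 :=
    hasDerivAt_iff_isLittleO.mp hdiffA
  have hlo' : ∀ᶠ u in nhds 0, |h u - u * A| ≤ ε / 2 * |u| := by
    have := hlo.def (by positivity : (0:ℝ) < ε / 2)
    filter_upwards [this] with u hu
    simpa [h0, Real.norm_eq_abs, smul_eq_mul, mul_comm] using hu
  obtain ⟨δ, hδpos, hδ⟩ := Metric.eventually_nhds_iff.mp hlo'
  set C : ℝ := |A| + ε with hCdef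
  have hCpos : 0 < C := by positivity
  set x₀ : ℝ := δ / 2 * Real.exp (-(C * ω)) with hx₀def
  have hx₀pos : 0 < x₀ := by positivity
  refine ⟨x₀, hx₀pos, ?_⟩
  intro x hx hdx
  have hxpos : 0 < x := hx
  have hxlt : x < x₀ := by
    rw [Real.dist_eq, sub_zero, abs_of_pos hxpos] at hdx; exact hdx
  -- bound on the upper envelope: x * exp ((A+ε)*t) < δ/2 for t ∈ [0, ω]
  have henv : ∀ t ∈ Icc (0:ℝ) ω, x * Real.exp ((A + ε) * t) < δ / 2 := by
    intro t ht
    have h1 : (A + ε) * t ≤ C * ω := by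
      have h2 : (A + ε) * t ≤ |A + ε| * t := mul_le_mul_of_nonneg_right (le_abs_self _) ht.1
      have h3 : |A + ε| ≤ C := by
        rw [hCdef]
        calc |A + ε| ≤ |A| + |ε| := abs_add_le _ _
          _ = |A| + ε := by rw [abs_of_pos hεpos]
      have h4 : |A + ε| * t ≤ C * ω :=
        mul_le_mul h3 ht.2 ht.1 (le_of_lt hCpos)
      linarith
    calc x * Real.exp ((A + ε) * t) ≤ x * Real.exp (C * ω) := by
          apply mul_le_mul_of_nonneg_left (Real.exp_le_exp.mpr h1) (le_of_lt hxpos)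
      _ < x₀ * Real.exp (C * ω) := by
          apply mul_lt_mul_of_pos_right hxlt (Real.exp_pos _)
      _ = δ / 2 := by
          rw [hx₀def, mul_assoc, ← Real.exp_add]; simp
  -- the key sandwich, by continuous induction
  set lo : ℝ → ℝ := fun t => x * Real.exp ((A - ε) * t) with hlodef
  set hi : ℝ → ℝ := fun t => x * Real.exp ((A + ε) * t) with hhidef
  have hlocont : Continuous lo := by rw [hlodef]; continuity
  have hhicont : Continuous hi := by rw [hhidef]; continuity
  set G : Set ℝ := {t | φ t x ≤ hi t ∧ lo t ≤ φ t x} with hGdef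
  have hGclosed : IsClosed (G ∩ Icc 0 ω) := by
    apply IsClosed.inter _ isClosed_Icc
    exact (isClosed_le (hcont x) hhicont).inter (isClosed_le hlocont (hcont x))
  have h0G : (0:ℝ) ∈ G := by
    constructor <;> simp [hGdef, hhidef, hlodef, hflow0 x]
  have key : Icc (0:ℝ) ω ⊆ G := by
    apply hGclosed.Icc_subset_of_forall_exists_gt h0G
    rintro t ⟨htG, ht0, htω⟩ y hy
    have hlot_pos : 0 < lo t := by
      rw [hlodef]; positivity
    have hψpos : 0 < φ t x := lt_of_lt_of_le hlot_pos htG.2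
    have hψlt : φ t x < δ / 2 :=
      lt_of_le_of_lt htG.1 (henv t ⟨ht0, le_of_lt htω⟩)
    have hψδ : |h (φ t x) - φ t x * A| ≤ ε / 2 * |φ t x| := by
      apply hδ
      rw [Real.dist_eq, sub_zero, abs_of_pos hψpos]; linarith [hδpos]
    rw [abs_of_pos hψpos] at hψδ
    -- derivatives of envelopes
    have hhideriv : HasDerivAt hi (x * (Real.exp ((A + ε) * t) * (A + ε))) t := by
      rw [hhidef]
      have := (((hasDerivAt_id t).const_mul (A + ε)).exp).const_mul x
      simpa using this
    have hloderiv : HasDerivAt lo (x * (Real.exp ((A - ε) * t) * (A - ε))) t := by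
      rw [hlodef]
      have := (((hasDerivAt_id t).const_mul (A - ε)).exp).const_mul x
      simpa using this
    -- upper step
    have hup : ∀ᶠ s in nhdsWithin t (Ioi t), φ s x - hi s < 0 := by
      apply aux_step_right ((hflow x t).sub hhideriv) (sub_nonpos.mpr htG.1)
      intro heq
      have heq' : φ t x = hi t := by
        have := sub_eq_zero.mp heq; linarith [this]
      have hrw : x * (Real.exp ((A + ε) * t) * (A + ε)) = (A + ε) * φ t x := by
        rw [heq', hhidef]; ring
      rw [hrw]
      have h1 : h (φ t x) ≤ φ t x * A + ε / 2 * φ t x := by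
        cases' abs_le.mp hψδ with hl hr; linarith
      linarith [mul_pos hεpos hψpos]
    -- lower step
    have hdown : ∀ᶠ s in nhdsWithin t (Ioi t), lo s - φ s x < 0 := by
      apply aux_step_right (hloderiv.sub (hflow x t)) (sub_nonpos.mpr htG.2)
      intro heq
      have heq' : lo t = φ t x := by
        have := sub_eq_zero.mp heq; linarith [this]
      have hrw : x * (Real.exp ((A - ε) * t) * (A - ε)) = (A - ε) * φ t x := by
        rw [← heq', hlodef]; ring
      rw [hrw]
      have h1 : φ t x * A - ε / 2 * φ t x ≤ h (φ t x) := by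
        cases' abs_le.mp hψδ with hl hr; linarith
      linarith [mul_pos hεpos hψpos]
    have hIoc : Ioc t y ∈ nhdsWithin t (Ioi t) := Ioc_mem_nhdsGT_of_mem ⟨le_refl t, hy⟩
    obtain ⟨s, hs1, hs2, hs3⟩ :=
      (hup.and (hdown.and (eventually_of_mem hIoc (fun s hs => hs)))).exists
    exact ⟨s, ⟨by linarith, by linarith⟩, hs3⟩
  -- conclude
  have hωG := key ⟨le_of_lt hω, le_refl ω⟩
  have hupω : φ ω x / x ≤ Real.exp ((A + ε) * ω) := by
    rw [div_le_iff₀ hxpos]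
    have h1 := hωG.1
    simp only [hhidef] at h1
    linarith [h1]
  have hdownω : Real.exp ((A - ε) * ω) ≤ φ ω x / x := by
    rw [le_div_iff₀ hxpos]
    have h1 := hωG.2
    simp only [hlodef] at h1
    linarith [h1]
  rw [Real.dist_eq, abs_sub_lt_iff]
  constructor
  · have h1 := (abs_lt.mp hqup).2
    linarith
  · have h1 := (abs_lt.mp hqdown).1
    linarith
end

section
/- Let h : ℝ → ℝ be C², h(0) = 0, with A := h'(0) < 0, let φ(t,x) be the flow of ẋ = h(x), fix ω > 0, and define R(x) := φ(ω, x) and g(x) := x / R(x) − 1 for x > 0 (assuming R(x) > 0 for x > 0). Then lim_{x → 0⁺} g(x) = exp(−A·ω) − 1 > 0. -/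
open Set Filter Real

/-- Linear bounds on `h` near `0`, from differentiability at `0`. -/
lemma stmt_5_lin (h : ℝ → ℝ) (A : ℝ) (hC2 : ContDiff ℝ 2 h) (h0 : h 0 = 0)
    (hA : A = deriv h 0) {ε : ℝ} (hε : 0 < ε) :
    ∃ δ > 0, ∀ y : ℝ, 0 ≤ y → y ≤ δ → (A - ε) * y ≤ h y ∧ h y ≤ (A + ε) * y := by
  have hdiff : DifferentiableAt ℝ h 0 :=
    (hC2.differentiable (by norm_num)).differentiableAt
  have hd : HasDerivAt h A 0 := by rw [hA]; exact hdiff.hasDerivAt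
  have hlo := (hasDerivAt_iff_isLittleO.mp hd).def hε
  rw [Metric.eventually_nhds_iff] at hlo
  obtain ⟨δ0, hδ0, hb⟩ := hlo
  refine ⟨δ0 / 2, by positivity, fun y hy0 hyδ => ?_⟩
  have hdist : dist y 0 < δ0 := by
    rw [Real.dist_eq, sub_zero, abs_of_nonneg hy0]; linarith
  have h1 := hb hdist
  simp only [h0, sub_zero, smul_eq_mul, Real.norm_eq_abs] at h1
  rw [abs_of_nonneg hy0, abs_le] at h1
  constructor <;> nlinarith [h1.1, h1.2]

/-- Trapping lemma: for small initial data, the flow stays trapped between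
exponential bounds up to time `ω`. -/
lemma stmt_5_trap (h : ℝ → ℝ) (φ : ℝ → ℝ → ℝ) (ω : ℝ) (hω : 0 < ω)
    (hC2 : ContDiff ℝ 2 h) (h0 : h 0 = 0)
    (A : ℝ) (hA : A = deriv h 0)
    (hflow0 : ∀ x : ℝ, φ 0 x = x)
    (hflow : ∀ x t : ℝ, HasDerivAt (fun s => φ s x) (h (φ t x)) t)
    {ε : ℝ} (hε : 0 < ε) (hεA : A + ε ≤ 0) :
    ∃ δ > 0, ∀ x : ℝ, 0 < x → x ≤ δ →
      x * Real.exp ((A - ε) * ω) ≤ φ ω x ∧ φ ω x ≤ x * Real.exp ((A + ε) * ω) := by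
  obtain ⟨δ0, hδ0, hb⟩ := stmt_5_lin h A hC2 h0 hA hε
  refine ⟨δ0 / 2, by positivity, fun x hx hxδ => ?_⟩
  set u : ℝ → ℝ := fun t => φ t x with hu_def
  have hu : ∀ t, HasDerivAt u (h (u t)) t := hflow x
  have hucont : Continuous u := continuous_iff_continuousAt.mpr fun t => (hu t).continuousAt
  have hu0 : u 0 = x := hflow0 x
  -- the closed "good" set
  set Q : Set ℝ := {s | x * Real.exp ((A - ε) * s) ≤ u s ∧ u s ≤ x * Real.exp ((A + ε) * s)}
    with hQ_def
  have hQclosed : IsClosed Q := by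
    apply IsClosed.inter
    · exact isClosed_le (by fun_prop) hucont
    · exact isClosed_le hucont (by fun_prop)
  have h0Q : (0 : ℝ) ∈ Q := by
    constructor <;> simp [hu0]
  -- membership in Q forces u to stay in the region where the bounds on h apply
  have hQregion : ∀ s, 0 ≤ s → s ∈ Q → 0 < u s ∧ u s ≤ δ0 / 2 := by
    intro s hs hsQ
    have hexp1 : Real.exp ((A + ε) * s) ≤ 1 := by
      rw [Real.exp_le_one_iff]
      exact mul_nonpos_of_nonpos_of_nonneg hεA hs
    constructor
    · have : 0 < x * Real.exp ((A - ε) * s) := by positivity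
      linarith [hsQ.1]
    · calc u s ≤ x * Real.exp ((A + ε) * s) := hsQ.2
        _ ≤ x * 1 := by nlinarith
        _ ≤ δ0 / 2 := by linarith
  -- monotonicity lemma: if u stays in [0, δ0] on Icc 0 b, then bounds hold on Icc 0 b
  have hmono : ∀ b : ℝ, 0 ≤ b → (∀ t ∈ Icc 0 b, 0 ≤ u t ∧ u t ≤ δ0) →
      ∀ t ∈ Icc 0 b, t ∈ Q := by
    intro b hb0 hreg t ht
    have hDconv : Convex ℝ (Icc (0:ℝ) b) := convex_Icc 0 b
    -- upper bound via v t = u t * exp (-((A+ε)*t))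
    have hderv : ∀ s : ℝ, HasDerivAt (fun t => u t * Real.exp (-((A + ε) * t)))
        (h (u s) * Real.exp (-((A + ε) * s)) +
          u s * (Real.exp (-((A + ε) * s)) * (-(A + ε)))) s := by
      intro s
      have he : HasDerivAt (fun t : ℝ => Real.exp (-((A + ε) * t)))
          (Real.exp (-((A + ε) * s)) * (-(A + ε))) s := by
        have : HasDerivAt (fun t : ℝ => -((A + ε) * t)) (-(A + ε)) s := by
          have h' := ((hasDerivAt_id s).const_mul (A + ε)).neg
          rw [mul_one] at h'
          exact h'
        exact this.exp
      exact (hu s).mul he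
    have hderw : ∀ s : ℝ, HasDerivAt (fun t => u t * Real.exp (-((A - ε) * t)))
        (h (u s) * Real.exp (-((A - ε) * s)) +
          u s * (Real.exp (-((A - ε) * s)) * (-(A - ε)))) s := by
      intro s
      have he : HasDerivAt (fun t : ℝ => Real.exp (-((A - ε) * t)))
          (Real.exp (-((A - ε) * s)) * (-(A - ε))) s := by
        have : HasDerivAt (fun t : ℝ => -((A - ε) * t)) (-(A - ε)) s := by
          have h' := ((hasDerivAt_id s).const_mul (A - ε)).neg
          rw [mul_one] at h'
          exact h'
        exact this.exp
      exact (hu s).mul he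
    have hvanti : AntitoneOn (fun t => u t * Real.exp (-((A + ε) * t))) (Icc 0 b) := by
      apply antitoneOn_of_deriv_nonpos hDconv
      · exact Continuous.continuousOn (by fun_prop)
      · intro s _
        exact ((hderv s).differentiableAt).differentiableWithinAt
      · intro s hs
        rw [interior_Icc] at hs
        rw [(hderv s).deriv]
        have hus := hreg s ⟨hs.1.le, hs.2.le⟩
        have hhle : h (u s) ≤ (A + ε) * u s := (hb (u s) hus.1 hus.2).2
        have hep : 0 < Real.exp (-((A + ε) * s)) := Real.exp_pos _
        nlinarith
    have hwmono : MonotoneOn (fun t => u t * Real.exp (-((A - ε) * t))) (Icc 0 b) := by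
      apply monotoneOn_of_deriv_nonneg hDconv
      · exact Continuous.continuousOn (by fun_prop)
      · intro s _
        exact ((hderw s).differentiableAt).differentiableWithinAt
      · intro s hs
        rw [interior_Icc] at hs
        rw [(hderw s).deriv]
        have hus := hreg s ⟨hs.1.le, hs.2.le⟩
        have hhge : (A - ε) * u s ≤ h (u s) := (hb (u s) hus.1 hus.2).1
        have hep : 0 < Real.exp (-((A - ε) * s)) := Real.exp_pos _
        nlinarith
    have h0mem : (0:ℝ) ∈ Icc (0:ℝ) b := ⟨le_refl 0, hb0⟩
    have hv := hvanti h0mem ht ht.1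
    have hw := hwmono h0mem ht ht.1
    simp only [hu0, mul_zero, neg_zero, Real.exp_zero, mul_one] at hv hw
    have he1 : (0:ℝ) < Real.exp (-((A + ε) * t)) := Real.exp_pos _
    have he2 : (0:ℝ) < Real.exp (-((A - ε) * t)) := Real.exp_pos _
    have hee1 : Real.exp (-((A + ε) * t)) * Real.exp ((A + ε) * t) = 1 := by
      rw [← Real.exp_add]; simp
    have hee2 : Real.exp (-((A - ε) * t)) * Real.exp ((A - ε) * t) = 1 := by
      rw [← Real.exp_add]; simp
    constructor
    · -- x ≤ u t * exp (-((A-ε)t)) gives x * exp((A-ε)t) ≤ u t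
      have := mul_le_mul_of_nonneg_right hw (Real.exp_nonneg ((A - ε) * t))
      calc x * Real.exp ((A - ε) * t)
          ≤ u t * Real.exp (-((A - ε) * t)) * Real.exp ((A - ε) * t) := this
        _ = u t := by rw [mul_assoc, hee2, mul_one]
    · have := mul_le_mul_of_nonneg_right hv (Real.exp_nonneg ((A + ε) * t))
      calc u t = u t * Real.exp (-((A + ε) * t)) * Real.exp ((A + ε) * t) := by
            rw [mul_assoc, hee1, mul_one]
        _ ≤ x * Real.exp ((A + ε) * t) := this
  -- continuous induction via the supremum
  set S : Set ℝ := {t | t ∈ Icc 0 ω ∧ Icc 0 t ⊆ Q} with hS_def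
  have h0S : (0:ℝ) ∈ S := ⟨⟨le_refl 0, hω.le⟩, by
    intro s hs
    have : s = 0 := le_antisymm hs.2 hs.1
    rw [this]; exact h0Q⟩
  have hSbdd : BddAbove S := ⟨ω, fun t ht => ht.1.2⟩
  have hSne : S.Nonempty := ⟨0, h0S⟩
  set T : ℝ := sSup S with hT_def
  have hT0 : 0 ≤ T := le_csSup hSbdd h0S
  have hTω : T ≤ ω := csSup_le hSne fun t ht => ht.1.2
  have hTQ : Icc 0 T ⊆ Q := by
    have hlt : Ico 0 T ⊆ Q := by
      intro s hs
      obtain ⟨t, htS, hst⟩ := exists_lt_of_lt_csSup hSne hs.2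
      exact htS.2 ⟨hs.1, hst.le⟩
    rcases eq_or_lt_of_le hT0 with hT0' | hT0'
    · intro s hs
      have : s = 0 := le_antisymm (hT0' ▸ hs.2) hs.1
      rw [this]; exact h0Q
    · have : Icc 0 T = closure (Ico 0 T) := (closure_Ico (ne_of_lt hT0')).symm
      rw [this]
      exact closure_minimal hlt hQclosed
  have hTS : T ∈ S := ⟨⟨hT0, hTω⟩, hTQ⟩
  -- claim T = ω
  have hTeq : T = ω := by
    by_contra hne
    have hTlt : T < ω := lt_of_le_of_ne hTω hne
    -- u T is in the open region (0, δ0)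
    have huT := hQregion T hT0 (hTQ ⟨hT0, le_refl T⟩)
    have hopen : Ioo (0:ℝ) δ0 ∈ nhds (u T) := by
      apply Ioo_mem_nhds huT.1
      linarith
    have hpre := (hucont.continuousAt (x := T)).preimage_mem_nhds hopen
    rw [Metric.mem_nhds_iff] at hpre
    obtain ⟨r, hr, hball⟩ := hpre
    set T' : ℝ := min ω (T + r / 2) with hT'_def
    have hTT' : T < T' := by
      apply lt_min hTlt; linarith
    have hT'ω : T' ≤ ω := min_le_left _ _
    -- region control on Icc 0 T'
    have hreg : ∀ t ∈ Icc 0 T', 0 ≤ u t ∧ u t ≤ δ0 := by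
      intro t ht
      rcases le_or_gt t T with htT | htT
      · have := hQregion t ht.1 (hTQ ⟨ht.1, htT⟩)
        exact ⟨this.1.le, by linarith⟩
      · have hdist : dist t T < r := by
          rw [Real.dist_eq, abs_of_nonneg (by linarith)]
          have : t ≤ T + r / 2 := le_trans ht.2 (min_le_right _ _)
          linarith
        have := hball hdist
        exact ⟨this.1.le, this.2.le⟩
    have hT'S : T' ∈ S :=
      ⟨⟨le_trans hT0 hTT'.le, hT'ω⟩, fun t ht => hmono T' (le_trans hT0 hTT'.le) hreg t ht⟩
    have : T' ≤ T := le_csSup hSbdd hT'S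
    linarith
  rw [hTeq] at hTQ
  exact hTQ ⟨hω.le, le_refl ω⟩

theorem stmt_5 (h : ℝ → ℝ) (φ : ℝ → ℝ → ℝ) (ω : ℝ) (hω : 0 < ω)
    (hC2 : ContDiff ℝ 2 h) (h0 : h 0 = 0)
    (A : ℝ) (hA : A = deriv h 0) (hAneg : A < 0)
    (hflow0 : ∀ x : ℝ, φ 0 x = x)
    (hflow : ∀ x t : ℝ, HasDerivAt (fun s => φ s x) (h (φ t x)) t)
    (hRpos : ∀ x : ℝ, 0 < x → 0 < φ ω x) :
    Tendsto (fun x => x / φ ω x - 1) (nhdsWithin 0 (Ioi 0))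
      (nhds (Real.exp (-A * ω) - 1)) ∧ Real.exp (-A * ω) - 1 > 0 := by
  constructor
  · rw [Metric.tendsto_nhdsWithin_nhds]
    intro η hη
    -- choose ε small enough
    have h1 : Tendsto (fun e : ℝ => Real.exp (-(A - e) * ω)) (nhds 0)
        (nhds (Real.exp (-A * ω))) := by
      have hc : Continuous fun e : ℝ => Real.exp (-(A - e) * ω) := by fun_prop
      have := hc.tendsto 0
      simpa using this
    have h2 : Tendsto (fun e : ℝ => Real.exp (-(A + e) * ω)) (nhds 0)
        (nhds (Real.exp (-A * ω))) := by
      have hc : Continuous fun e : ℝ => Real.exp (-(A + e) * ω) := by fun_prop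
      have := hc.tendsto 0
      simpa using this
    have ev1 : ∀ᶠ e in nhds (0:ℝ), Real.exp (-(A - e) * ω) < Real.exp (-A * ω) + η :=
      h1.eventually_lt_const (by linarith)
    have ev2 : ∀ᶠ e in nhds (0:ℝ), Real.exp (-A * ω) - η < Real.exp (-(A + e) * ω) :=
      h2.eventually_const_lt (by linarith)
    have ev3 : ∀ᶠ e in nhds (0:ℝ), e < -A := eventually_lt_nhds (by linarith)
    have evall := ((ev1.and (ev2.and ev3)).filter_mono
      (nhdsWithin_le_nhds (s := Ioi (0:ℝ)))).and eventually_mem_nhdsWithin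
    obtain ⟨ε, ⟨hε1, hε2, hε3⟩, hεpos⟩ := evall.exists
    have hεpos' : (0:ℝ) < ε := hεpos
    have hεA : A + ε ≤ 0 := by linarith
    obtain ⟨δ, hδ, htrap⟩ := stmt_5_trap h φ ω hω hC2 h0 A hA hflow0 hflow hεpos' hεA
    refine ⟨δ, hδ, ?_⟩
    intro x hx hdist
    have hx' : (0:ℝ) < x := hx
    have hxδ : x ≤ δ := by
      rw [Real.dist_eq, sub_zero, abs_of_pos hx'] at hdist
      exact hdist.le
    obtain ⟨hlow, hhigh⟩ := htrap x hx' hxδ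
    have hφ : 0 < φ ω x := hRpos x hx'
    have hxe1 : (0:ℝ) < x * Real.exp ((A - ε) * ω) := by positivity
    have key1 : x / (x * Real.exp ((A + ε) * ω)) = Real.exp (-(A + ε) * ω) := by
      rw [show -(A + ε) * ω = -((A + ε) * ω) by ring, Real.exp_neg]
      field_simp
    have key2 : x / (x * Real.exp ((A - ε) * ω)) = Real.exp (-(A - ε) * ω) := by
      rw [show -(A - ε) * ω = -((A - ε) * ω) by ring, Real.exp_neg]
      field_simp
    have i1 : x / (x * Real.exp ((A + ε) * ω)) ≤ x / φ ω x := by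
      apply div_le_div_of_nonneg_left hx'.le hφ hhigh
    have i2 : x / φ ω x ≤ x / (x * Real.exp ((A - ε) * ω)) := by
      apply div_le_div_of_nonneg_left hx'.le hxe1 hlow
    rw [key1] at i1
    rw [key2] at i2
    rw [Real.dist_eq]
    have : x / φ ω x - 1 - (Real.exp (-A * ω) - 1) = x / φ ω x - Real.exp (-A * ω) := by
      ring
    rw [this, abs_lt]
    constructor <;> linarith
  · have hpos : (0:ℝ) < -A * ω := by nlinarith
    have := Real.exp_lt_exp.mpr hpos
    rw [Real.exp_zero] at this
    linarith
end

section
/- Let h : ℝ → ℝ be C² with h(0) = 0 and A := h'(0) < 0, write h(x) = A·x + H(x) with H(x) = O(x²), and let φ(t,x) be the flow of ẋ = h(x). Fix ω > 0 and R(x) := φ(ω, x). If H is bounded on [0, ∞) and the flow is defined for all t ∈ [0, ω] and x ≥ 0, then lim_{x → +∞} R(x)/x = exp(A·ω). -/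
open Set Filter Real

theorem stmt_14 (h : ℝ → ℝ) (φ : ℝ → ℝ → ℝ) (ω : ℝ) (hω : 0 < ω)
    (hC2 : ContDiff ℝ 2 h) (h0 : h 0 = 0)
    (A : ℝ) (hA : A = deriv h 0) (hAneg : A < 0)
    (hbdd : ∃ C : ℝ, ∀ x : ℝ, 0 ≤ x → |h x - A * x| ≤ C)
    (hflow0 : ∀ x : ℝ, 0 ≤ x → φ 0 x = x)
    (hflow : ∀ x : ℝ, 0 ≤ x → ∀ t ∈ Icc 0 ω, HasDerivAt (fun s => φ s x) (h (φ t x)) t) :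
    Tendsto (fun x => φ ω x / x) atTop (nhds (Real.exp (A * ω))) := by
  obtain ⟨C, hC⟩ := hbdd
  have hC0 : 0 ≤ C := by simpa [h0] using hC 0 le_rfl
  have hderiv_cont : Continuous (deriv h) := by
    have h1 : ContDiff ℝ 1 h := hC2.of_le (by norm_num)
    exact (contDiff_one_iff_deriv.mp h1).2
  -- Step 1: nonnegativity of the flow
  have key : ∀ x : ℝ, 0 ≤ x → ∀ t ∈ Icc 0 ω, 0 ≤ φ t x := by
    intro x hx
    by_contra hcon
    push_neg at hcon
    obtain ⟨t₁, ht₁, ht₁neg⟩ := hcon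
    set f : ℝ → ℝ := fun t => φ t x with hf
    have hfc : ContinuousOn f (Icc 0 ω) := fun t ht =>
      ((hflow x hx t ht).continuousAt).continuousWithinAt
    -- there is a zero before t₁
    have hzero : ∃ t₀ ∈ Icc 0 t₁, f t₀ = 0 := by
      rcases eq_or_lt_of_le hx with hx0 | hx0
      · exact ⟨0, ⟨le_rfl, ht₁.1⟩, by simp only [f]; rw [hflow0 x hx, ← hx0]⟩
      · have hsub : Icc (0:ℝ) t₁ ⊆ Icc 0 ω := Icc_subset_Icc le_rfl ht₁.2
        have := intermediate_value_Icc' ht₁.1 (hfc.mono hsub)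
        have h0mem : (0:ℝ) ∈ Icc (f t₁) (f 0) := by
          constructor
          · exact le_of_lt ht₁neg
          · simp only [f, hflow0 x hx]; exact hx
        obtain ⟨t₀, ht₀, ht₀0⟩ := this h0mem
        exact ⟨t₀, ht₀, ht₀0⟩
    -- take the last zero before t₁
    set S : Set ℝ := {t | t ∈ Icc 0 t₁ ∧ f t = 0} with hS
    have hSne : S.Nonempty := by obtain ⟨t₀, h1, h2⟩ := hzero; exact ⟨t₀, h1, h2⟩
    have hScompact : IsCompact S := by
      have hclosed : IsClosed S := by
        have hsub : Icc (0:ℝ) t₁ ⊆ Icc 0 ω := Icc_subset_Icc le_rfl ht₁.2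
        have : S = Icc 0 t₁ ∩ (f ⁻¹' {0}) := by ext t; simp [S, Set.mem_inter_iff]
        rw [this]
        exact ((hfc.mono hsub).preimage_isClosed_of_isClosed isClosed_Icc
          isClosed_singleton)
      exact isCompact_Icc.of_isClosed_subset hclosed fun t ht => ht.1
    obtain ⟨t₀, ht₀S, ht₀max⟩ := hScompact.exists_isGreatest hSne
    have ht₀Icc : t₀ ∈ Icc 0 t₁ := ht₀S.1
    have ht₀0 : f t₀ = 0 := ht₀S.2
    have ht₀le : t₀ ≤ t₁ := ht₀Icc.2
    -- Lipschitz bound for h on a compact interval containing the trajectory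
    obtain ⟨R, hR⟩ := (isCompact_Icc.image_of_continuousOn hfc).exists_bound_of_continuousOn
      continuousOn_id
    have hRmem : ∀ t ∈ Icc 0 ω, f t ∈ Icc (-(|R|+1)) (|R|+1) := by
      intro t ht
      have := hR (f t) ⟨t, ht, rfl⟩
      simp only [id] at this
      rw [Real.norm_eq_abs] at this
      have h1 : |f t| ≤ |R| + 1 := le_trans this (by
        have := le_abs_self R; linarith)
      exact abs_le.mp h1
    obtain ⟨K, hK⟩ := (isCompact_Icc (a := -(|R|+1)) (b := |R|+1)).exists_bound_of_continuousOn
      hderiv_cont.continuousOn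
    set K' : NNReal := ⟨max K 0, le_max_right _ _⟩ with hK'
    have hLip : LipschitzOnWith K' h (Icc (-(|R|+1)) (|R|+1)) := by
      apply Convex.lipschitzOnWith_of_nnnorm_deriv_le
        (fun y _ => (hC2.differentiable (by norm_num)).differentiableAt)
        (fun y hy => ?_) (convex_Icc _ _)
      have := hK y hy
      rw [← NNReal.coe_le_coe]
      simp only [coe_nnnorm]
      exact le_trans this (le_max_left _ _)
    -- uniqueness: f coincides with 0 on [t₀, t₁]
    have huniq : EqOn f (fun _ => (0:ℝ)) (Icc t₀ t₁) := by
      apply ODE_solution_unique_of_mem_Icc_right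
        (v := fun _ y => h y) (s := fun _ => Icc (-(|R|+1)) (|R|+1)) (K := K')
        (fun _ _ => hLip)
      · exact hfc.mono (Icc_subset_Icc ht₀Icc.1 ht₁.2)
      · intro t ht
        have htΩ : t ∈ Icc 0 ω := ⟨le_trans ht₀Icc.1 ht.1, le_trans (le_of_lt ht.2) ht₁.2⟩
        exact (hflow x hx t htΩ).hasDerivWithinAt
      · intro t ht
        exact hRmem t ⟨le_trans ht₀Icc.1 ht.1, le_trans (le_of_lt ht.2) ht₁.2⟩
      · exact continuousOn_const
      · intro t ht
        simpa [h0] using (hasDerivWithinAt_const t (Ici t) (0:ℝ))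
      · intro t ht
        constructor
        · have := abs_nonneg R; linarith
        · have := abs_nonneg R; linarith
      · exact ht₀0
    have hft₁ : φ t₁ x = 0 := huniq (right_mem_Icc.mpr ht₀le)
    rw [hft₁] at ht₁neg
    exact absurd ht₁neg (lt_irrefl 0)
  -- Step 2: variation of constants estimate
  have est : ∀ x : ℝ, 0 < x → |φ ω x / x - Real.exp (A * ω)| ≤ C * ω / x := by
    intro x hx
    have hx' : (0:ℝ) ≤ x := le_of_lt hx
    set g : ℝ → ℝ := fun t => Real.exp (-A * t) * φ t x with hg
    have hg' : ∀ t ∈ Icc 0 ω, HasDerivWithinAt g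
        (Real.exp (-A * t) * (h (φ t x) - A * φ t x)) (Icc 0 ω) t := by
      intro t ht
      have h1 : HasDerivAt (fun s => Real.exp (-A * s)) (Real.exp (-A * t) * (-A)) t := by
        simpa [mul_comm] using ((hasDerivAt_id t).const_mul (-A)).exp
      have h2 := h1.mul (hflow x hx' t ht)
      have : Real.exp (-A * t) * (-A) * φ t x + Real.exp (-A * t) * h (φ t x)
          = Real.exp (-A * t) * (h (φ t x) - A * φ t x) := by ring
      rw [this] at h2
      exact h2.hasDerivWithinAt
    have hbound : ∀ t ∈ Icc 0 ω,
        ‖Real.exp (-A * t) * (h (φ t x) - A * φ t x)‖ ≤ Real.exp (-A * ω) * C := by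
      intro t ht
      rw [Real.norm_eq_abs, abs_mul, abs_of_pos (Real.exp_pos _)]
      have h1 : |h (φ t x) - A * φ t x| ≤ C := hC _ (key x hx' t ht)
      have h2 : Real.exp (-A * t) ≤ Real.exp (-A * ω) := by
        apply Real.exp_le_exp.mpr
        nlinarith [ht.2, hAneg]
      calc Real.exp (-A * t) * |h (φ t x) - A * φ t x|
          ≤ Real.exp (-A * t) * C := by
            exact mul_le_mul_of_nonneg_left h1 (le_of_lt (Real.exp_pos _))
        _ ≤ Real.exp (-A * ω) * C := mul_le_mul_of_nonneg_right h2 hC0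
    have hmvt := (convex_Icc (0:ℝ) ω).norm_image_sub_le_of_norm_hasDerivWithin_le
      hg' hbound (left_mem_Icc.mpr (le_of_lt hω)) (right_mem_Icc.mpr (le_of_lt hω))
    have hg0 : g 0 = x := by simp [g, hflow0 x hx']
    rw [hg0] at hmvt
    simp only [Real.norm_eq_abs, sub_zero] at hmvt
    -- |exp(-Aω) φ ω x - x| ≤ exp(-Aω) C ω
    have habs : |Real.exp (-A * ω) * φ ω x - x| ≤ Real.exp (-A * ω) * C * ω := by
      calc |Real.exp (-A * ω) * φ ω x - x| = |g ω - x| := by rfl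
        _ ≤ Real.exp (-A * ω) * C * |ω| := hmvt
        _ = Real.exp (-A * ω) * C * ω := by rw [abs_of_pos hω]
    have hEE : Real.exp (A * ω) * Real.exp (-A * ω) = 1 := by
      rw [← Real.exp_add]; ring_nf; exact Real.exp_zero
    have hkey : φ ω x - Real.exp (A * ω) * x
        = Real.exp (A * ω) * (Real.exp (-A * ω) * φ ω x - x) := by
      rw [mul_sub, ← mul_assoc, hEE, one_mul]
    have hdiv : φ ω x / x - Real.exp (A * ω) = (φ ω x - Real.exp (A * ω) * x) / x := by
      field_simp
    rw [hdiv, abs_div, abs_of_pos hx, hkey, abs_mul, abs_of_pos (Real.exp_pos _)]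
    rw [div_le_div_iff₀ hx hx]
    calc Real.exp (A * ω) * |Real.exp (-A * ω) * φ ω x - x| * x
        ≤ Real.exp (A * ω) * (Real.exp (-A * ω) * C * ω) * x := by
          apply mul_le_mul_of_nonneg_right _ hx'
          exact mul_le_mul_of_nonneg_left habs (le_of_lt (Real.exp_pos _))
      _ = (Real.exp (A * ω) * Real.exp (-A * ω)) * (C * ω) * x := by ring
      _ = C * ω * x := by rw [hEE]; ring
  -- Step 3: squeeze
  rw [← tendsto_sub_nhds_zero_iff]
  apply squeeze_zero_norm' (a := fun x => C * ω / x)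
  · filter_upwards [eventually_gt_atTop (0:ℝ)] with x hx
    simpa [Real.norm_eq_abs] using est x hx
  · have : Tendsto (fun x : ℝ => C * ω * x⁻¹) atTop (nhds 0) := by
      simpa using tendsto_inv_atTop_zero.const_mul (C * ω)
    simpa [div_eq_mul_inv] using this
end
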